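/- arXiv:2408.05703 — 2 statements merged into one kernel-verified Lean document; each statement's English description precedes it below -/
import Mathlib

section
/- In a digraph whose underlying graph is chordal, a shortest directed cycle has length exactly 3, provided the digraph contains at least one directed cycle and no antiparallel arcs. -/
/-- A directed cycle (dicycle) in a digraph with arc relation `A`, given by its list of
vertices: all vertices distinct, consecutive vertices joined by arcs, and an arc from the
last vertex back to the first. -/
def IsDicycle {V : Type*} (A : V → V → Prop) : List V → Prop
  | [] => False
  | v :: l => (v :: l).Nodup ∧ List.Chain A v (l ++ [v])

/-- The arcs of a cyclic list of vertices (consecutive pairs, including the wrap-around). -/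
def cycleArcs {V : Type*} : List V → List (V × V)
  | [] => []
  | v :: l => List.zip (v :: l) (l ++ [v])

/-- A relation is acyclic if it admits no dicycle. -/
def AcyclicRel {V : Type*} (A : V → V → Prop) : Prop := ∀ l : List V, ¬ IsDicycle A l

/-- A transversal of the digraph `A`: a set of arcs meeting every dicycle. -/
def IsTransversal {V : Type*} (A : V → V → Prop) (T : Set (V × V)) : Prop :=
  (∀ e ∈ T, A e.1 e.2) ∧ ∀ l, IsDicycle A l → ∃ e ∈ cycleArcs l, e ∈ T

/-- The digraph `A` has a packing of `k` pairwise disjoint transversals. -/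
def HasPacking {V : Type*} (A : V → V → Prop) (k : ℕ) : Prop :=
  ∃ T : Fin k → Set (V × V), (∀ i, IsTransversal A (T i)) ∧
    Pairwise fun i j => Disjoint (T i) (T j)

/-- `ν(G)`: the maximum size of a packing of disjoint dicycle-transversals. -/
noncomputable def dinu {V : Type*} (A : V → V → Prop) : ℕ := sSup {k | HasPacking A k}

/-- `g(G)`: the length of a shortest dicycle. -/
noncomputable def digirth {V : Type*} (A : V → V → Prop) : ℕ :=
  sInf {n | ∃ l, IsDicycle A l ∧ l.length = n}

/-- A graph is chordal if every induced cycle (a cycle all of whose support adjacencies are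
cycle edges) has length `3`. -/
def IsChordal {V : Type*} (G : SimpleGraph V) : Prop :=
  ∀ (v : V) (w : G.Walk v v), w.IsCycle →
    (∀ a ∈ w.support, ∀ b ∈ w.support, G.Adj a b → s(a, b) ∈ w.edges) →
    w.length = 3

/-! A shortest dicycle `C` is an induced cycle of the underlying graph: an arc `a → b` between
two vertices of `C` other than an arc of `C` would, together with the path of `C` from `b` to
`a`, close a strictly shorter dicycle. Without loops and antiparallel arcs `C` has at least three
vertices, so it is a cycle of the underlying graph, and chordality forces its length to be `3`. -/

theorem List.next_infix_cons_append {V : Type*} [DecidableEq V] {v x : V} {l : List V}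
    (hnd : (v :: l).Nodup) (hx : x ∈ v :: l) : [x, (v :: l).next x hx] <:+: v :: (l ++ [v]) := by
  by_cases hd : x ∈ (v :: l).dropLast
  · exact (List.nextOr_infix_of_mem_dropLast hd _).trans ⟨[], [v], by simp⟩
  · have hsplit := List.dropLast_append_getLast (List.cons_ne_nil v l)
    have hlast : x = (v :: l).getLast (List.cons_ne_nil v l) := by
      rw [← hsplit] at hx
      simpa [hd] using hx
    subst hlast
    rw [List.next_getLast_eq_head _ _ hnd]
    refine ⟨(v :: l).dropLast, [], ?_⟩
    conv_rhs => rw [← List.cons_append, ← hsplit]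
    simp

namespace SimpleGraph.Walk

variable {V : Type*} {G : SimpleGraph V} {v : V} {l : List V}

def ofCyclicSupport (v : V) (l : List V) (h : (v :: (l ++ [v])).IsChain G.Adj) : G.Walk v v :=
  (ofSupport _ (List.cons_ne_nil _ _) h).copy List.head_cons (by simp)

@[simp]
theorem support_ofCyclicSupport (h : (v :: (l ++ [v])).IsChain G.Adj) :
    (ofCyclicSupport v l h).support = v :: (l ++ [v]) := by
  rw [ofCyclicSupport, support_copy, support_ofSupport]

@[simp]
theorem length_ofCyclicSupport (h : (v :: (l ++ [v])).IsChain G.Adj) :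
    (ofCyclicSupport v l h).length = l.length + 1 := by
  rw [ofCyclicSupport, length_copy, length_ofSupport]
  simp

theorem isCycle_ofCyclicSupport (h : (v :: (l ++ [v])).IsChain G.Adj) (hnd : (v :: l).Nodup)
    (hl : 2 ≤ l.length) : (ofCyclicSupport v l h).IsCycle := by
  have hnil : ¬(ofCyclicSupport v l h).Nil := by
    simp [← length_eq_zero_iff]
  rw [isCycle_iff_isPath_tail_and_le_length, isPath_def, support_tail_of_not_nil _ hnil,
    support_ofCyclicSupport, length_ofCyclicSupport]
  exact ⟨(List.nodup_append_comm (l₁ := [v])).mp hnd, by omega⟩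

theorem next_mem_edges_ofCyclicSupport [DecidableEq V] (h : (v :: (l ++ [v])).IsChain G.Adj)
    (hnd : (v :: l).Nodup) {x : V} (hx : x ∈ v :: l) :
    s(x, (v :: l).next x hx) ∈ (ofCyclicSupport v l h).edges :=
  infix_support_iff_mem_edges.mp (.inl (by simpa using List.next_infix_cons_append hnd hx))

end SimpleGraph.Walk

open SimpleGraph.Walk in
theorem IsChordal.length_eq_three {V : Type*} [DecidableEq V] {G : SimpleGraph V}
    (hG : IsChordal G) {v : V} {l : List V} (h : (v :: (l ++ [v])).IsChain G.Adj)
    (hnd : (v :: l).Nodup) (hl : 2 ≤ l.length)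
    (hind : ∀ a (ha : a ∈ v :: l), ∀ b (hb : b ∈ v :: l), G.Adj a b →
      b = (v :: l).next a ha ∨ a = (v :: l).next b hb) :
    (v :: l).length = 3 := by
  have hmem : ∀ a ∈ (ofCyclicSupport v l h).support, a ∈ v :: l := by
    simp +contextual [or_imp]
  have hlen := hG v _ (isCycle_ofCyclicSupport h hnd hl) fun a ha b hb hab => ?_
  · simpa using hlen
  rcases hind a (hmem a ha) b (hmem b hb) hab with rfl | rfl
  · exact next_mem_edges_ofCyclicSupport h hnd _
  · rw [Sym2.eq_swap]
    exact next_mem_edges_ofCyclicSupport h hnd _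

section Dicycle

variable {V : Type*} {A : V → V → Prop}

theorem isDicycle_iff {l : List V} :
    IsDicycle A l ↔ l ≠ [] ∧ l.Nodup ∧ Cycle.Chain A (l : Cycle V) := by
  cases l with
  | nil => simp [IsDicycle]
  | cons v l => exact (and_iff_right (List.cons_ne_nil v l)).symm

theorem IsDicycle.of_isRotated {l l' : List V} (h : IsDicycle A l) (hr : l ~r l') :
    IsDicycle A l' := by
  obtain ⟨hne, hnd, hch⟩ := isDicycle_iff.mp h
  exact isDicycle_iff.mpr ⟨fun h' => hne (List.isRotated_nil_iff.mp (h' ▸ hr)),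
    hr.nodup_iff.mp hnd, Cycle.coe_eq_coe.mpr hr ▸ hch⟩

theorem IsDicycle.three_le_length (hanti : ∀ x y, A x y → ¬ A y x) {l : List V}
    (h : IsDicycle A l) : 3 ≤ l.length := by
  rcases l with _ | ⟨v, _ | ⟨w, _ | ⟨x, l⟩⟩⟩
  · exact h.elim
  · have hvv : A v v := List.IsChain.rel h.2
    exact (hanti v v hvv hvv).elim
  · exact (hanti v w (List.IsChain.rel h.2) (List.IsChain.rel (List.IsChain.of_cons h.2))).elim
  · simp

theorem IsDicycle.shortcut {a b : V} {q r : List V} (h : IsDicycle A (a :: (q ++ b :: r)))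
    (hab : A a b) : IsDicycle A (b :: (r ++ [a])) := by
  obtain ⟨hnd, hch⟩ := h
  constructor
  · have : (a :: b :: r).Nodup := hnd.sublist ((List.sublist_append_right q _).cons_cons a)
    simpa using (List.nodup_append_comm (l₁ := [a]) (l₂ := b :: r)).mp this
  · show List.IsChain A (b :: r ++ [a] ++ [b])
    have hpath : (b :: r ++ [a]).IsChain A := List.IsChain.infix hch ⟨a :: q, [], by simp⟩
    exact hpath.append_overlap (List.isChain_pair.mpr hab) (List.cons_ne_nil a [])

theorem IsDicycle.eq_next_of_forall_length_le [DecidableEq V] {l : List V} (hl : IsDicycle A l)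
    (hmin : ∀ m, IsDicycle A m → l.length ≤ m.length) {a b : V} (ha : a ∈ l) (hb : b ∈ l)
    (hne : a ≠ b) (hab : A a b) : b = l.next a ha := by
  obtain ⟨p, s, rfl⟩ := List.append_of_mem ha
  have hr : p ++ a :: s ~r a :: (s ++ p) := by
    simpa using List.isRotated_append (l := p) (l' := a :: s)
  rw [List.isRotated_next_eq hr (isDicycle_iff.mp hl).2.1]
  obtain ⟨q, r, hqr⟩ : ∃ q r, s ++ p = q ++ b :: r :=
    List.append_of_mem (by simpa [hne.symm] using hr.mem_iff.mp hb)
  have hrot : IsDicycle A (a :: (q ++ b :: r)) := hqr ▸ hl.of_isRotated hr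
  have hq : q = [] := by
    have hlen := hmin _ (hrot.shortcut hab)
    have := hr.perm.length_eq
    simp only [List.length_append, List.length_cons, List.length_nil, hqr] at this hlen
    exact List.eq_nil_of_length_eq_zero (by omega)
  simp only [hqr, hq, List.nil_append, List.next_cons_cons_eq]

theorem digirth_le_length {l : List V} (h : IsDicycle A l) : digirth A ≤ l.length :=
  Nat.sInf_le ⟨l, h, rfl⟩

theorem exists_isDicycle_length_eq_digirth (h : ∃ l, IsDicycle A l) :
    ∃ l, IsDicycle A l ∧ l.length = digirth A :=
  let ⟨l, hl⟩ := h
  Nat.sInf_mem (s := {n | ∃ l, IsDicycle A l ∧ l.length = n}) ⟨l.length, l, hl, rfl⟩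

end Dicycle

/-- In a digraph without antiparallel arcs whose underlying graph is chordal
and which contains a dicycle, the shortest dicycle has length exactly `3`. -/
theorem digirth_eq_three_of_chordal {V : Type*} (A : V → V → Prop)
    (hanti : ∀ x y, A x y → ¬ A y x)
    (hchordal : IsChordal (SimpleGraph.fromRel A))
    (hcyc : ∃ l, IsDicycle A l) :
    digirth A = 3 := by
  classical
  obtain ⟨_ | ⟨v, l⟩, hc, hlen⟩ := exists_isDicycle_length_eq_digirth hcyc
  · exact hc.elim
  have hmin : ∀ m, IsDicycle A m → (v :: l).length ≤ m.length :=
    fun m hm => hlen ▸ digirth_le_length hm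
  have hirrefl : ∀ x y, A x y → x ≠ y := fun x y hxy hxy' => hanti x y hxy (hxy' ▸ hxy)
  have hadj : (v :: (l ++ [v])).IsChain (SimpleGraph.fromRel A).Adj :=
    List.IsChain.imp (fun x y hxy => (SimpleGraph.fromRel_adj A x y).2 ⟨hirrefl x y hxy, .inl hxy⟩)
      hc.2
  rw [← hlen]
  refine hchordal.length_eq_three hadj hc.1 (by simpa using hc.three_le_length hanti) ?_
  intro a ha b hb hab
  obtain ⟨hne, hab | hba⟩ := (SimpleGraph.fromRel_adj A a b).1 hab
  · exact .inl (hc.eq_next_of_forall_length_le hmin ha hb hne hab)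
  · exact .inr (hc.eq_next_of_forall_length_le hmin hb ha hne.symm hba)
end

section
/- Suppose a digraph G is the union of two subdigraphs G1 and G2 with V(G1) ∩ V(G2) = {a,b,c}, where a,b,c span a ditriangle in G contained in both G1 and G2 (arcs ab, bc, ca). If G1 has a packing {T1,T2,T3} of three disjoint dicycle-transversals with ab ∈ T1, bc ∈ T2, ca ∈ T3, and G2 has a packing {T1',T2',T3'} with ab ∈ T1', bc ∈ T2', ca ∈ T3', then {T1 ∪ T1', T2 ∪ T2', T3 ∪ T3'} is a packing of three disjoint dicycle-transversals of G. -/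
/-! A set `T` of arcs is a transversal exactly when deleting it leaves an acyclic digraph. Outside
`T₁ ∪ T₁'` each side keeps the path `b → c → a` of the ditriangle, so, being acyclic, it has no
path between two of `a, b, c` going backwards in the order `b < c < a`. A dicycle of the union that
uses both sides changes side only at `a, b, c`, hence would climb this order all the way round.
Disjointness holds because the only arcs the two sides share are `ab`, `bc`, `ca`. -/

open Relation

section

variable {V : Type*}

theorem isDicycle_iff_s11 {R : V → V → Prop} {l : List V} :
    IsDicycle R l ↔ l ≠ [] ∧ l.Nodup ∧ ∀ e ∈ cycleArcs l, R e.1 e.2 := by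
  cases l with
  | nil => simp [IsDicycle]
  | cons v l =>
    change _ ∧ List.IsChain R (v :: l ++ [v]) ↔ _
    rw [List.isChain_cons_append_singleton_iff_forall₂, List.forall₂_iff_zip]
    simp [cycleArcs]

theorem isDicycle_and_notMem_iff {A : V → V → Prop} {T : Set (V × V)} {l : List V} :
    IsDicycle (fun x y => A x y ∧ (x, y) ∉ T) l ↔ IsDicycle A l ∧ ∀ e ∈ cycleArcs l, e ∉ T := by
  simp only [isDicycle_iff_s11, forall_and]
  tauto

theorem isTransversal_iff_acyclicRel {A : V → V → Prop} {T : Set (V × V)} :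
    IsTransversal A T ↔ (∀ e ∈ T, A e.1 e.2) ∧ AcyclicRel (fun x y => A x y ∧ (x, y) ∉ T) := by
  refine and_congr_right fun _ => forall_congr' fun l => ?_
  rw [isDicycle_and_notMem_iff]
  simp

theorem AcyclicRel.mono {R Q : V → V → Prop} (hQ : AcyclicRel Q) (h : ∀ x y, R x y → Q x y) :
    AcyclicRel R := fun l hl =>
  let ⟨hne, hnd, harcs⟩ := isDicycle_iff_s11.mp hl
  hQ l (isDicycle_iff_s11.mpr ⟨hne, hnd, fun e he => h _ _ (harcs e he)⟩)

theorem IsDicycle.transGen {R : V → V → Prop} {v : V} {l : List V} (h : IsDicycle R (v :: l)) :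
    TransGen R v v := by
  obtain ⟨w, t, hwt⟩ := List.exists_cons_of_ne_nil (List.concat_ne_nil v l)
  have hch : List.IsChain R (v :: w :: t) := hwt ▸ h.2
  refine TransGen.head' (List.isChain_cons_cons.mp hch).1
    (List.relationReflTransGen_of_exists_isChain_cons t (List.isChain_cons_cons.mp hch).2 ?_)
  simp [← hwt]

theorem exists_nodup_isChain_of_reflTransGen {R : V → V → Prop} {x y : V}
    (h : ReflTransGen R y x) :
    ∃ p : List V, p.Nodup ∧ p.IsChain R ∧ p.head? = some y ∧ p.getLast? = some x := by
  induction h using ReflTransGen.head_induction_on with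
  | refl => exact ⟨[x], List.nodup_singleton x, .singleton x, rfl, rfl⟩
  | @head y z hyz _ ih =>
    obtain ⟨p, hnd, hch, hhead, hlast⟩ := ih
    by_cases hy : y ∈ p
    · obtain ⟨s, t, rfl⟩ := List.append_of_mem hy
      exact ⟨y :: t, hnd.sublist (List.sublist_append_right _ _), hch.right_of_append, rfl,
        by simpa using hlast⟩
    · refine ⟨y :: p, List.nodup_cons.mpr ⟨hy, hnd⟩, hch.cons (by simpa [hhead]), rfl, ?_⟩
      cases p <;> simp_all

theorem exists_isDicycle_of_transGen {R : V → V → Prop} {x : V} (h : TransGen R x x) :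
    ∃ l, IsDicycle R l := by
  obtain ⟨y, hxy, hyx⟩ := TransGen.head'_iff.mp h
  obtain ⟨p, hnd, hch, hhead, hlast⟩ := exists_nodup_isChain_of_reflTransGen hyx
  have hp : p.dropLast ++ [x] = p := List.dropLast_append_getLast? x hlast
  refine ⟨x :: p.dropLast, (List.perm_append_singleton x _).nodup_iff.mp (by rwa [hp]), ?_⟩
  change List.IsChain R (x :: (p.dropLast ++ [x]))
  rw [hp]
  exact hch.cons (by simpa [hhead])

theorem acyclicRel_iff {R : V → V → Prop} : AcyclicRel R ↔ ∀ x, ¬TransGen R x x := by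
  refine ⟨fun h _ hx => (exists_isDicycle_of_transGen hx).elim h, ?_⟩
  rintro h (_ | ⟨v, l⟩) hl
  exacts [hl, h v hl.transGen]

section Gluing

variable {R₁ R₂ : V → V → Prop} {S₁ S₂ : Set V}

theorem Relation.TransGen.mem_of_support {R : V → V → Prop} {S : Set V}
    (hS : ∀ x y, R x y → x ∈ S ∧ y ∈ S) {x y : V} (h : TransGen R x y) : x ∈ S ∧ y ∈ S := by
  induction h with
  | single h => exact hS _ _ h
  | tail _ h ih => exact ⟨ih.1, (hS _ _ h).2⟩

theorem transGen_or_transGen_trans (hS₁ : ∀ x y, R₁ x y → x ∈ S₁ ∧ y ∈ S₁)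
    (hS₂ : ∀ x y, R₂ x y → x ∈ S₂ ∧ y ∈ S₂) {u v w : V}
    (huv : TransGen R₁ u v ∨ TransGen R₂ u v) (hvw : TransGen R₁ v w ∨ TransGen R₂ v w) :
    (TransGen R₁ u w ∨ TransGen R₂ u w) ∨ v ∈ S₁ ∩ S₂ := by
  rcases huv with h | h <;> rcases hvw with h' | h'
  · exact .inl (.inl (h.trans h'))
  · exact .inr ⟨(h.mem_of_support hS₁).2, (h'.mem_of_support hS₂).1⟩
  · exact .inr ⟨(h'.mem_of_support hS₁).1, (h.mem_of_support hS₂).2⟩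
  · exact .inl (.inr (h.trans h'))

theorem AcyclicRel.or_of_rank {α : Type*} [Preorder α] (f : V → α)
    (hS₁ : ∀ x y, R₁ x y → x ∈ S₁ ∧ y ∈ S₁) (hS₂ : ∀ x y, R₂ x y → x ∈ S₂ ∧ y ∈ S₂)
    (h₁ : AcyclicRel R₁) (h₂ : AcyclicRel R₂)
    (hf₁ : ∀ x ∈ S₁ ∩ S₂, ∀ y ∈ S₁ ∩ S₂, TransGen R₁ x y → f x < f y)
    (hf₂ : ∀ x ∈ S₁ ∩ S₂, ∀ y ∈ S₁ ∩ S₂, TransGen R₂ x y → f x < f y) :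
    AcyclicRel fun x y => R₁ x y ∨ R₂ x y := by
  rw [acyclicRel_iff] at h₁ h₂ ⊢
  have hf : ∀ x ∈ S₁ ∩ S₂, ∀ y ∈ S₁ ∩ S₂, TransGen R₁ x y ∨ TransGen R₂ x y → f x < f y :=
    fun x hx y hy h => h.elim (hf₁ x hx y hy) (hf₂ x hx y hy)
  -- a walk stays on one side, or reaches its first glued vertex `x` and leaves its last one `y`
  -- on one side each, with `f x ≤ f y`
  have hwalk : ∀ u v, TransGen (fun x y => R₁ x y ∨ R₂ x y) u v →
      (TransGen R₁ u v ∨ TransGen R₂ u v) ∨ ∃ x ∈ S₁ ∩ S₂, ∃ y ∈ S₁ ∩ S₂,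
        f x ≤ f y ∧ (TransGen R₁ u x ∨ TransGen R₂ u x) ∧ (TransGen R₁ y v ∨ TransGen R₂ y v) := by
    intro u v h
    induction h with
    | single h => exact .inl (h.imp .single .single)
    | @tail v w _ hvw ih =>
      have hvw : TransGen R₁ v w ∨ TransGen R₂ v w := hvw.imp .single .single
      rcases ih with huv | ⟨x, hx, y, hy, hxy, hux, hyv⟩
      · rcases transGen_or_transGen_trans hS₁ hS₂ huv hvw with huw | hv
        · exact .inl huw
        · exact .inr ⟨v, hv, v, hv, le_rfl, huv, hvw⟩
      · rcases transGen_or_transGen_trans hS₁ hS₂ hyv hvw with hyw | hv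
        · exact .inr ⟨x, hx, y, hy, hxy, hux, hyw⟩
        · exact .inr ⟨x, hx, v, hv, hxy.trans (hf y hy v hv hyv).le, hux, hvw⟩
  intro u hu
  rcases hwalk u u hu with (h | h) | ⟨x, hx, y, hy, hxy, hux, hyu⟩
  · exact h₁ u h
  · exact h₂ u h
  · rcases transGen_or_transGen_trans hS₁ hS₂ hyu hux with hyx | hu
    · exact (hxy.trans_lt (hf y hy x hx hyx)).false
    · exact ((hxy.trans_lt (hf y hy u hu hyu)).trans (hf u hu x hx hux)).false

end Gluing

theorem IsTransversal.loop_mem {A : V → V → Prop} {T : Set (V × V)} (hT : IsTransversal A T)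
    {x : V} (h : A x x) : (x, x) ∈ T := by
  obtain ⟨e, he, heT⟩ := hT.2 [x] (isDicycle_iff_s11.mpr ⟨by simp, by simp, by simp [cycleArcs, h]⟩)
  simp only [cycleArcs, List.zip_cons_cons, List.mem_singleton, List.nil_append,
    List.zip_nil_left] at he
  rwa [he] at heT

theorem IsTransversal.swap_mem {A : V → V → Prop} {T : Set (V × V)} (hT : IsTransversal A T)
    {x y : V} (hxy : x ≠ y) (h : A x y) (h' : A y x) (hn : (x, y) ∉ T) : (y, x) ∈ T := by
  obtain ⟨e, he, heT⟩ :=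
    hT.2 [x, y] (isDicycle_iff_s11.mpr ⟨by simp, by simp [hxy], by simp [cycleArcs, h, h']⟩)
  simp only [cycleArcs, List.cons_append, List.nil_append, List.zip_cons_cons, List.zip_nil_right,
    List.mem_cons, List.not_mem_nil, or_false] at he
  rcases he with rfl | rfl
  exacts [absurd heT hn, heT]

structure IsDitrianglePacking (A : V → V → Prop) (a b c : V) (T₁ T₂ T₃ : Set (V × V)) :
    Prop where
  isTransversal₁ : IsTransversal A T₁
  isTransversal₂ : IsTransversal A T₂
  isTransversal₃ : IsTransversal A T₃
  disjoint₁₂ : Disjoint T₁ T₂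
  disjoint₂₃ : Disjoint T₂ T₃
  disjoint₃₁ : Disjoint T₃ T₁
  mem₁ : (a, b) ∈ T₁
  mem₂ : (b, c) ∈ T₂
  mem₃ : (c, a) ∈ T₃

namespace IsDitrianglePacking

variable {A : V → V → Prop} {a b c : V} {T₁ T₂ T₃ : Set (V × V)}

theorem rotate (P : IsDitrianglePacking A a b c T₁ T₂ T₃) :
    IsDitrianglePacking A b c a T₂ T₃ T₁ :=
  ⟨P.isTransversal₂, P.isTransversal₃, P.isTransversal₁, P.disjoint₂₃, P.disjoint₃₁, P.disjoint₁₂,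
    P.mem₂, P.mem₃, P.mem₁⟩

theorem not_loop (P : IsDitrianglePacking A a b c T₁ T₂ T₃) {x : V} : ¬A x x := fun h =>
  P.disjoint₁₂.notMem_of_mem_left (P.isTransversal₁.loop_mem h) (P.isTransversal₂.loop_mem h)

theorem not_rel_swap (P : IsDitrianglePacking A a b c T₁ T₂ T₃) (hab : a ≠ b) : ¬A b a := by
  intro hba
  have hab' : A a b := P.isTransversal₁.1 _ P.mem₁
  exact P.disjoint₂₃.notMem_of_mem_left
    (P.isTransversal₂.swap_mem hab hab' hba (P.disjoint₁₂.notMem_of_mem_left P.mem₁))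
    (P.isTransversal₃.swap_mem hab hab' hba (P.disjoint₃₁.notMem_of_mem_right P.mem₁))

/-- A loop or a reversed arc would give a dicycle of length at most two, which two of the
transversals could only meet in the same arc. -/
theorem eq_of_rel (P : IsDitrianglePacking A a b c T₁ T₂ T₃) (hab : a ≠ b) (hbc : b ≠ c)
    (hca : c ≠ a) {x y : V} (hx : x ∈ ({a, b, c} : Set V)) (hy : y ∈ ({a, b, c} : Set V))
    (h : A x y) : (x, y) = (a, b) ∨ (x, y) = (b, c) ∨ (x, y) = (c, a) := by
  simp only [Set.mem_insert_iff, Set.mem_singleton_iff] at hx hy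
  rcases hx with rfl | rfl | rfl <;> rcases hy with rfl | rfl | rfl
  all_goals first
    | exact .inl rfl
    | exact .inr (.inl rfl)
    | exact .inr (.inr rfl)
    | exact absurd h P.not_loop
    | exact absurd h (P.not_rel_swap hab)
    | exact absurd h (P.rotate.not_rel_swap hbc)
    | exact absurd h (P.rotate.rotate.not_rel_swap hca)

theorem acyclicRel (P : IsDitrianglePacking A a b c T₁ T₂ T₃) :
    AcyclicRel fun x y => A x y ∧ (x, y) ∉ T₁ :=
  (isTransversal_iff_acyclicRel.mp P.isTransversal₁).2

/-- Outside `T₁` the path `b → c → a` survives, so a path going backwards in this order would close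
a dicycle. -/
theorem lt_of_transGen {α : Type*} [Preorder α] (P : IsDitrianglePacking A a b c T₁ T₂ T₃)
    {f : V → α} (hbc : f b < f c) (hca : f c < f a) {x y : V} (hx : x ∈ ({a, b, c} : Set V))
    (hy : y ∈ ({a, b, c} : Set V)) (h : TransGen (fun x y => A x y ∧ (x, y) ∉ T₁) x y) :
    f x < f y := by
  have rbc : A b c ∧ (b, c) ∉ T₁ :=
    ⟨P.isTransversal₂.1 _ P.mem₂, P.disjoint₁₂.notMem_of_mem_right P.mem₂⟩
  have rca : A c a ∧ (c, a) ∉ T₁ :=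
    ⟨P.isTransversal₃.1 _ P.mem₃, P.disjoint₃₁.notMem_of_mem_left P.mem₃⟩
  by_contra hlt
  suffices hyx : ReflTransGen (fun x y => A x y ∧ (x, y) ∉ T₁) y x from
    acyclicRel_iff.mp P.acyclicRel x (h.trans_left hyx)
  simp only [Set.mem_insert_iff, Set.mem_singleton_iff] at hx hy
  rcases hx with rfl | rfl | rfl <;> rcases hy with rfl | rfl | rfl
  all_goals first
    | exact .refl
    | exact .single rbc
    | exact .single rca
    | exact .head rbc (.single rca)
    | exact absurd hbc hlt
    | exact absurd hca hlt
    | exact absurd (hbc.trans hca) hlt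

end IsDitrianglePacking

section Union

variable {A₁ A₂ : V → V → Prop} {S₁ S₂ : Set V} {a b c : V} {T₁ T₂ T₃ T₁' T₂' T₃' : Set (V × V)}

theorem IsDitrianglePacking.isTransversal_union (P₁ : IsDitrianglePacking A₁ a b c T₁ T₂ T₃)
    (P₂ : IsDitrianglePacking A₂ a b c T₁' T₂' T₃')
    (hS₁ : ∀ x y, A₁ x y → x ∈ S₁ ∧ y ∈ S₁) (hS₂ : ∀ x y, A₂ x y → x ∈ S₂ ∧ y ∈ S₂)
    (hinter : S₁ ∩ S₂ = {a, b, c}) (hab : a ≠ b) (hbc : b ≠ c) (hca : c ≠ a) :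
    IsTransversal (fun x y => A₁ x y ∨ A₂ x y) (T₁ ∪ T₁') := by
  classical
  let f : V → ℕ := fun v => if v = b then 0 else if v = c then 1 else 2
  have hfbc : f b < f c := by simp [f, hbc.symm]
  have hfca : f c < f a := by simp [f, hbc.symm, hab, hca.symm]
  refine isTransversal_iff_acyclicRel.mpr ⟨?_, ?_⟩
  · rintro e (he | he)
    exacts [.inl (P₁.isTransversal₁.1 e he), .inr (P₂.isTransversal₁.1 e he)]
  refine (AcyclicRel.or_of_rank f (fun x y h => hS₁ x y h.1) (fun x y h => hS₂ x y h.1)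
    P₁.acyclicRel P₂.acyclicRel ?_ ?_).mono ?_
  · rw [hinter]
    exact fun x hx y hy => P₁.lt_of_transGen hfbc hfca hx hy
  · rw [hinter]
    exact fun x hx y hy => P₂.lt_of_transGen hfbc hfca hx hy
  · rintro x y ⟨h | h, hn⟩ <;> simp only [Set.mem_union, not_or] at hn
    exacts [.inl ⟨h, hn.1⟩, .inr ⟨h, hn.2⟩]

theorem IsDitrianglePacking.disjoint_fst_snd (P₁ : IsDitrianglePacking A₁ a b c T₁ T₂ T₃)
    (P₂ : IsDitrianglePacking A₂ a b c T₁' T₂' T₃') (hab : a ≠ b) (hbc : b ≠ c) (hca : c ≠ a)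
    (hX : ∀ x y, A₁ x y → A₂ x y → x ∈ ({a, b, c} : Set V) ∧ y ∈ ({a, b, c} : Set V)) :
    Disjoint T₁ T₂' := by
  refine Set.disjoint_left.mpr fun ⟨x, y⟩ h₁ h₂ => ?_
  have hxy₁ := P₁.isTransversal₁.1 _ h₁
  obtain ⟨hx, hy⟩ := hX x y hxy₁ (P₂.isTransversal₂.1 _ h₂)
  rcases P₁.eq_of_rel hab hbc hca hx hy hxy₁ with he | he | he <;> rw [he] at h₁ h₂
  · exact P₂.disjoint₁₂.notMem_of_mem_left P₂.mem₁ h₂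
  · exact P₁.disjoint₁₂.notMem_of_mem_left h₁ P₁.mem₂
  · exact P₁.disjoint₃₁.notMem_of_mem_left P₁.mem₃ h₁

theorem IsDitrianglePacking.disjoint_union (P₁ : IsDitrianglePacking A₁ a b c T₁ T₂ T₃)
    (P₂ : IsDitrianglePacking A₂ a b c T₁' T₂' T₃')
    (hS₁ : ∀ x y, A₁ x y → x ∈ S₁ ∧ y ∈ S₁) (hS₂ : ∀ x y, A₂ x y → x ∈ S₂ ∧ y ∈ S₂)
    (hinter : S₁ ∩ S₂ = {a, b, c}) (hab : a ≠ b) (hbc : b ≠ c) (hca : c ≠ a) :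
    Disjoint (T₁ ∪ T₁') (T₂ ∪ T₂') := by
  have hX : ∀ x y, A₁ x y → A₂ x y → x ∈ ({a, b, c} : Set V) ∧ y ∈ ({a, b, c} : Set V) := by
    rw [← hinter]
    exact fun x y h₁ h₂ => ⟨⟨(hS₁ x y h₁).1, (hS₂ x y h₂).1⟩, ⟨(hS₁ x y h₁).2, (hS₂ x y h₂).2⟩⟩
  simp only [Set.disjoint_union_left, Set.disjoint_union_right]
  exact ⟨⟨P₁.disjoint₁₂, P₂.disjoint_fst_snd P₁ hab hbc hca fun x y h₂ h₁ => hX x y h₁ h₂⟩,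
    ⟨P₁.disjoint_fst_snd P₂ hab hbc hca hX, P₂.disjoint₁₂⟩⟩

end Union

end

theorem packing_glue_along_ditriangle_general {V : Type*}
    (A1 A2 : V → V → Prop) (S1 S2 : Set V) (a b c : V)
    (hsupp1 : ∀ x y, A1 x y → x ∈ S1 ∧ y ∈ S1)
    (hsupp2 : ∀ x y, A2 x y → x ∈ S2 ∧ y ∈ S2)
    (hinter : S1 ∩ S2 = {a, b, c})
    (hab : a ≠ b) (hbc : b ≠ c) (hac : a ≠ c)
    (T1 T2 T3 T1' T2' T3' : Set (V × V))
    (hT1 : IsTransversal A1 T1) (hT2 : IsTransversal A1 T2) (hT3 : IsTransversal A1 T3)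
    (hT1' : IsTransversal A2 T1') (hT2' : IsTransversal A2 T2') (hT3' : IsTransversal A2 T3')
    (hd12 : Disjoint T1 T2) (hd13 : Disjoint T1 T3) (hd23 : Disjoint T2 T3)
    (hd12' : Disjoint T1' T2') (hd13' : Disjoint T1' T3') (hd23' : Disjoint T2' T3')
    (hab1 : (a, b) ∈ T1) (hbc1 : (b, c) ∈ T2) (hca1 : (c, a) ∈ T3)
    (hab2 : (a, b) ∈ T1') (hbc2 : (b, c) ∈ T2') (hca2 : (c, a) ∈ T3') :
    IsTransversal (fun x y => A1 x y ∨ A2 x y) (T1 ∪ T1') ∧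
    IsTransversal (fun x y => A1 x y ∨ A2 x y) (T2 ∪ T2') ∧
    IsTransversal (fun x y => A1 x y ∨ A2 x y) (T3 ∪ T3') ∧
    Disjoint (T1 ∪ T1') (T2 ∪ T2') ∧ Disjoint (T1 ∪ T1') (T3 ∪ T3') ∧
    Disjoint (T2 ∪ T2') (T3 ∪ T3') := by
  have P₁ : IsDitrianglePacking A1 a b c T1 T2 T3 :=
    ⟨hT1, hT2, hT3, hd12, hd23, hd13.symm, hab1, hbc1, hca1⟩
  have P₂ : IsDitrianglePacking A2 a b c T1' T2' T3' :=
    ⟨hT1', hT2', hT3', hd12', hd23', hd13'.symm, hab2, hbc2, hca2⟩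
  have hinter' : S1 ∩ S2 = {b, c, a} := by rw [hinter, Set.insert_comm, Set.pair_comm]
  have hinter'' : S1 ∩ S2 = {c, a, b} := by rw [hinter', Set.insert_comm, Set.pair_comm]
  exact ⟨P₁.isTransversal_union P₂ hsupp1 hsupp2 hinter hab hbc hac.symm,
    P₁.rotate.isTransversal_union P₂.rotate hsupp1 hsupp2 hinter' hbc hac.symm hab,
    P₁.rotate.rotate.isTransversal_union P₂.rotate.rotate hsupp1 hsupp2 hinter'' hac.symm hab hbc,
    P₁.disjoint_union P₂ hsupp1 hsupp2 hinter hab hbc hac.symm,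
    (P₁.rotate.rotate.disjoint_union P₂.rotate.rotate hsupp1 hsupp2 hinter'' hac.symm hab hbc).symm,
    P₁.rotate.disjoint_union P₂.rotate hsupp1 hsupp2 hinter' hbc hac.symm hab⟩

/-- If `G = G₁ ∪ G₂` with `V(G₁) ∩ V(G₂) = {a, b, c}` spanning a ditriangle
`ab, bc, ca` contained in both parts, and each part has a packing of three disjoint
transversals containing `ab`, `bc`, `ca` respectively, then the unions form a packing of
three disjoint transversals of `G`. -/
theorem packing_glue_along_ditriangle {V : Type*}
    (A1 A2 : V → V → Prop) (S1 S2 : Set V) (a b c : V)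
    (hsupp1 : ∀ x y, A1 x y → x ∈ S1 ∧ y ∈ S1)
    (hsupp2 : ∀ x y, A2 x y → x ∈ S2 ∧ y ∈ S2)
    (hinter : S1 ∩ S2 = {a, b, c})
    (hab : a ≠ b) (hbc : b ≠ c) (hac : a ≠ c)
    (htri1 : A1 a b ∧ A1 b c ∧ A1 c a) (htri2 : A2 a b ∧ A2 b c ∧ A2 c a)
    (T1 T2 T3 T1' T2' T3' : Set (V × V))
    (hT1 : IsTransversal A1 T1) (hT2 : IsTransversal A1 T2) (hT3 : IsTransversal A1 T3)
    (hT1' : IsTransversal A2 T1') (hT2' : IsTransversal A2 T2') (hT3' : IsTransversal A2 T3')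
    (hd12 : Disjoint T1 T2) (hd13 : Disjoint T1 T3) (hd23 : Disjoint T2 T3)
    (hd12' : Disjoint T1' T2') (hd13' : Disjoint T1' T3') (hd23' : Disjoint T2' T3')
    (hab1 : (a, b) ∈ T1) (hbc1 : (b, c) ∈ T2) (hca1 : (c, a) ∈ T3)
    (hab2 : (a, b) ∈ T1') (hbc2 : (b, c) ∈ T2') (hca2 : (c, a) ∈ T3') :
    IsTransversal (fun x y => A1 x y ∨ A2 x y) (T1 ∪ T1') ∧
    IsTransversal (fun x y => A1 x y ∨ A2 x y) (T2 ∪ T2') ∧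
    IsTransversal (fun x y => A1 x y ∨ A2 x y) (T3 ∪ T3') ∧
    Disjoint (T1 ∪ T1') (T2 ∪ T2') ∧ Disjoint (T1 ∪ T1') (T3 ∪ T3') ∧
    Disjoint (T2 ∪ T2') (T3 ∪ T3') :=
  packing_glue_along_ditriangle_general A1 A2 S1 S2 a b c hsupp1 hsupp2 hinter hab hbc hac T1 T2 T3
    T1' T2' T3' hT1 hT2 hT3 hT1' hT2' hT3' hd12 hd13 hd23 hd12' hd13' hd23' hab1 hbc1 hca1 hab2 hbc2
    hca2
end
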